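/- arXiv:1901.08102 — 3 statements merged into one kernel-verified Lean document; each statement's English description precedes it below -/
import Mathlib

section
/- Let |φ⟩ = e^{iχ0}m|00⟩ + e^{iχ1}n|01⟩ + e^{iχ2}q|10⟩ + t|11⟩ be a unit vector in C^2⊗C^2 with m,n,q,t ≥ 0. The expansion of |φ⟩⟨φ| in the Pauli basis Σ T_{μν} σ_μ⊗σ_ν has vanishing off-diagonal correlation coefficients T_{ij} (i≠j, i,j∈{1,2,3}) if and only if the system of equations mn·cos(χ0-χ1)=qt·cos(χ2), mn·sin(χ0-χ1)=qt·sin(χ2), mq·cos(χ0-χ2)=nt·cos(χ1), mq·sin(χ0-χ2)=nt·sin(χ1), nq·sin(χ1-χ2)=0, mt·sin(χ0)=0 holds. -/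
open Matrix Kronecker

noncomputable def σx : Matrix (Fin 2) (Fin 2) ℂ := !![0, 1; 1, 0]
noncomputable def σy : Matrix (Fin 2) (Fin 2) ℂ := !![0, -Complex.I; Complex.I, 0]
noncomputable def σz : Matrix (Fin 2) (Fin 2) ℂ := !![1, 0; 0, -1]

/-- The Pauli basis `σ₀ = I, σ₁ = σx, σ₂ = σy, σ₃ = σz`. -/
noncomputable def pauli : Fin 4 → Matrix (Fin 2) (Fin 2) ℂ := ![1, σx, σy, σz]

/-!
`T_{μν} = ⟨φ|σ_μ ⊗ σ_ν|φ⟩ / 4`, and for `μ, ν ≠ 0` this is a real combination of the products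
`φ_p φ̄_r`. In polar form these products are `|φ_p| |φ_r|` times `e^{i(χ_p - χ_r)}`, so each off-diagonal
coefficient is a difference of two terms of the system. `T₁₂` and `T₂₁` only differ in the sign of
`nq sin(χ₁ - χ₂)`, so together they force both it and `mt sin χ₀` to vanish.
-/

theorem forall_offDiag_eq_zero_iff {α : Type*} [Zero α] (f : Fin 4 → Fin 4 → α) :
    (∀ i j : Fin 4, i ≠ 0 → j ≠ 0 → i ≠ j → f i j = 0) ↔
      f 1 2 = 0 ∧ f 2 1 = 0 ∧ f 1 3 = 0 ∧ f 3 1 = 0 ∧ f 2 3 = 0 ∧ f 3 2 = 0 := by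
  refine ⟨fun h => ⟨h 1 2 ?_ ?_ ?_, h 2 1 ?_ ?_ ?_, h 1 3 ?_ ?_ ?_, h 3 1 ?_ ?_ ?_,
    h 2 3 ?_ ?_ ?_, h 3 2 ?_ ?_ ?_⟩, ?_⟩ <;> try decide
  rintro ⟨h12, h21, h13, h31, h23, h32⟩ i j hi hj hij
  fin_cases i <;> fin_cases j <;> simp_all

open Complex in
theorem re_exp_mul_I_mul_star (α β x y : ℝ) :
    (cexp (α * I) * x * star (cexp (β * I) * y)).re = x * y * Real.cos (α - β) := by
  simp [exp_mul_I, ← ofReal_cos, ← ofReal_sin, Real.cos_sub]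
  ring

open Complex in
theorem im_exp_mul_I_mul_star (α β x y : ℝ) :
    (cexp (α * I) * x * star (cexp (β * I) * y)).im = x * y * Real.sin (α - β) := by
  simp [exp_mul_I, ← ofReal_cos, ← ofReal_sin, Real.sin_sub]
  ring

theorem trace_mul_vecMulVec {ι R : Type*} [Fintype ι] [NonUnitalSemiring R]
    (M : Matrix ι ι R) (x y : ι → R) :
    (M * vecMulVec x y).trace = (M *ᵥ x) ⬝ᵥ y := by
  rw [mul_vecMulVec, trace_vecMulVec]

noncomputable def pauliCorrelation (φ : Fin 2 × Fin 2 → ℂ) (μ ν : Fin 4) : ℂ :=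
  (1 / 4) * ((pauli μ ⊗ₖ pauli ν) * vecMulVec φ (star φ)).trace

section PauliCorrelation

variable (φ : Fin 2 × Fin 2 → ℂ)

theorem pauliCorrelation_one_two :
    pauliCorrelation φ 1 2 =
      (((φ (0, 1) * star (φ (1, 0))).im - (φ (0, 0) * star (φ (1, 1))).im) / 2 : ℝ) := by
  rw [pauliCorrelation, trace_mul_vecMulVec]
  apply Complex.ext <;> simp [dotProduct, mulVec, Fintype.sum_prod_type, pauli, σx, σy] <;> ring

theorem pauliCorrelation_two_one :
    pauliCorrelation φ 2 1 =
      ((-(φ (0, 1) * star (φ (1, 0))).im - (φ (0, 0) * star (φ (1, 1))).im) / 2 : ℝ) := by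
  rw [pauliCorrelation, trace_mul_vecMulVec]
  apply Complex.ext <;> simp [dotProduct, mulVec, Fintype.sum_prod_type, pauli, σx, σy] <;> ring

theorem pauliCorrelation_one_three :
    pauliCorrelation φ 1 3 =
      (((φ (0, 0) * star (φ (1, 0))).re - (φ (0, 1) * star (φ (1, 1))).re) / 2 : ℝ) := by
  rw [pauliCorrelation, trace_mul_vecMulVec]
  apply Complex.ext <;> simp [dotProduct, mulVec, Fintype.sum_prod_type, pauli, σx, σz] <;> ring

theorem pauliCorrelation_three_one :
    pauliCorrelation φ 3 1 =
      (((φ (0, 0) * star (φ (0, 1))).re - (φ (1, 0) * star (φ (1, 1))).re) / 2 : ℝ) := by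
  rw [pauliCorrelation, trace_mul_vecMulVec]
  apply Complex.ext <;> simp [dotProduct, mulVec, Fintype.sum_prod_type, pauli, σx, σz] <;> ring

theorem pauliCorrelation_two_three :
    pauliCorrelation φ 2 3 =
      (((φ (0, 1) * star (φ (1, 1))).im - (φ (0, 0) * star (φ (1, 0))).im) / 2 : ℝ) := by
  rw [pauliCorrelation, trace_mul_vecMulVec]
  apply Complex.ext <;> simp [dotProduct, mulVec, Fintype.sum_prod_type, pauli, σy, σz] <;> ring

theorem pauliCorrelation_three_two :
    pauliCorrelation φ 3 2 =
      (((φ (1, 0) * star (φ (1, 1))).im - (φ (0, 0) * star (φ (0, 1))).im) / 2 : ℝ) := by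
  rw [pauliCorrelation, trace_mul_vecMulVec]
  apply Complex.ext <;> simp [dotProduct, mulVec, Fintype.sum_prod_type, pauli, σy, σz] <;> ring

end PauliCorrelation

theorem diagonal_correlation_iff_system_general (m n q t χ0 χ1 χ2 : ℝ)
    (φ : Fin 2 × Fin 2 → ℂ)
    (hφ : φ = fun p =>
      if p = (0, 0) then Complex.exp (χ0 * Complex.I) * m
      else if p = (0, 1) then Complex.exp (χ1 * Complex.I) * n
      else if p = (1, 0) then Complex.exp (χ2 * Complex.I) * q
      else (t : ℂ))
    (T : Fin 4 → Fin 4 → ℂ)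
    (hT : T = fun μ ν => ((1 : ℂ)/4) *
      ((pauli μ ⊗ₖ pauli ν) * vecMulVec φ (star φ)).trace) :
    (∀ i j : Fin 4, i ≠ 0 → j ≠ 0 → i ≠ j → T i j = 0) ↔
      (m * n * Real.cos (χ0 - χ1) = q * t * Real.cos χ2 ∧
       m * n * Real.sin (χ0 - χ1) = q * t * Real.sin χ2 ∧
       m * q * Real.cos (χ0 - χ2) = n * t * Real.cos χ1 ∧
       m * q * Real.sin (χ0 - χ2) = n * t * Real.sin χ1 ∧
       n * q * Real.sin (χ1 - χ2) = 0 ∧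
       m * t * Real.sin χ0 = 0) := by
  obtain rfl : T = pauliCorrelation φ := hT
  have φ₀₀ : φ (0, 0) = Complex.exp (χ0 * Complex.I) * m := by simp [hφ]
  have φ₀₁ : φ (0, 1) = Complex.exp (χ1 * Complex.I) * n := by simp [hφ]
  have φ₁₀ : φ (1, 0) = Complex.exp (χ2 * Complex.I) * q := by simp [hφ]
  -- `t` gets the phase `0`, so that all four amplitudes have the same polar form.
  have φ₁₁ : φ (1, 1) = Complex.exp ((0 : ℝ) * Complex.I) * t := by simp [hφ]
  simp only [forall_offDiag_eq_zero_iff, pauliCorrelation_one_two, pauliCorrelation_two_one,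
    pauliCorrelation_one_three, pauliCorrelation_three_one, pauliCorrelation_two_three,
    pauliCorrelation_three_two, φ₀₀, φ₀₁, φ₁₀, φ₁₁, re_exp_mul_I_mul_star,
    im_exp_mul_I_mul_star, sub_zero, Complex.ofReal_eq_zero]
  constructor
  · rintro ⟨h12, h21, h13, h31, h23, h32⟩
    refine ⟨?_, ?_, ?_, ?_, ?_, ?_⟩ <;> linarith
  · rintro ⟨h31, h32, h13, h23, hnq, hmt⟩
    refine ⟨?_, ?_, ?_, ?_, ?_, ?_⟩ <;> linarith

theorem diagonal_correlation_iff_system (m n q t χ0 χ1 χ2 : ℝ)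
    (hm : 0 ≤ m) (hn : 0 ≤ n) (hq : 0 ≤ q) (ht : 0 ≤ t)
    (hunit : m ^ 2 + n ^ 2 + q ^ 2 + t ^ 2 = 1)
    (φ : Fin 2 × Fin 2 → ℂ)
    (hφ : φ = fun p =>
      if p = (0, 0) then Complex.exp (χ0 * Complex.I) * m
      else if p = (0, 1) then Complex.exp (χ1 * Complex.I) * n
      else if p = (1, 0) then Complex.exp (χ2 * Complex.I) * q
      else (t : ℂ))
    (T : Fin 4 → Fin 4 → ℂ)
    (hT : T = fun μ ν => ((1 : ℂ)/4) *
      ((pauli μ ⊗ₖ pauli ν) * vecMulVec φ (star φ)).trace) :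
    (∀ i j : Fin 4, i ≠ 0 → j ≠ 0 → i ≠ j → T i j = 0) ↔
      (m * n * Real.cos (χ0 - χ1) = q * t * Real.cos χ2 ∧
       m * n * Real.sin (χ0 - χ1) = q * t * Real.sin χ2 ∧
       m * q * Real.cos (χ0 - χ2) = n * t * Real.cos χ1 ∧
       m * q * Real.sin (χ0 - χ2) = n * t * Real.sin χ1 ∧
       n * q * Real.sin (χ1 - χ2) = 0 ∧
       m * t * Real.sin χ0 = 0) :=
  diagonal_correlation_iff_system_general m n q t χ0 χ1 χ2 φ hφ T hT
end

section
/- Let A = (I⊗E)(|φ^+⟩⟨φ^+|) be the output of the amplitude-damping channel E with parameter γ ∈ [0,1] applied to the second qubit of the Bell state |φ^+⟩. Then Tr(W_2 A) = (1/4)[2(2a²-1)√(1-γ) + γ - 2a√(1-a²)·γ], where W_2 = (|φ_2⟩⟨φ_2|)^Γ with |φ_2⟩ = a|ψ^+⟩ + √(1-a²)|ψ^-⟩ and 0 ≤ a ≤ 1. -/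
open Matrix Kronecker

noncomputable def phiPlus : Fin 2 × Fin 2 → ℂ := fun p =>
  if p = (0, 0) then 1 / Real.sqrt 2 else if p = (1, 1) then 1 / Real.sqrt 2 else 0

noncomputable def psiPlus : Fin 2 × Fin 2 → ℂ := fun p =>
  if p = (0, 1) then 1 / Real.sqrt 2 else if p = (1, 0) then 1 / Real.sqrt 2 else 0

noncomputable def psiMinus : Fin 2 × Fin 2 → ℂ := fun p =>
  if p = (0, 1) then 1 / Real.sqrt 2 else if p = (1, 0) then -(1 / Real.sqrt 2) else 0

/-- Partial transpose on the second tensor factor. -/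
def ptrans (X : Matrix (Fin 2 × Fin 2) (Fin 2 × Fin 2) ℂ) :
    Matrix (Fin 2 × Fin 2) (Fin 2 × Fin 2) ℂ :=
  Matrix.of fun p q => X (p.1, q.2) (q.1, p.2)

/-! For a Kraus operator `K`, `Tr (W * K ρ Kᴴ) = ⟪K φ, W (K φ)⟫` when `ρ = |φ⟩⟨φ|`, and
`(1 ⊗ B) |φ⁺⟩ = vec (Bᵀ) / √2`. Since `φ₂` lives on `|01⟩, |10⟩`, only four entries of
`W₂ = (|φ₂⟩⟨φ₂|)^Γ` are nonzero: the `A₀` branch picks up the coherence `(a + b)(a - b) / 2`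
with weight `√(1 - γ)`, the `A₁` branch the population `(a - b)² / 2` with weight `γ`
(here `b = √(1 - a²)`, so `b² = 1 - a²`). -/
theorem Matrix.mul_vecMulVec_star_mul_conjTranspose {ι κ R : Type*} [Fintype κ] [CommSemiring R]
    [StarRing R] (K : Matrix ι κ R) (v : κ → R) :
    K * vecMulVec v (star v) * Kᴴ = vecMulVec (K *ᵥ v) (star (K *ᵥ v)) := by
  rw [mul_vecMulVec, vecMulVec_mul, star_mulVec]

theorem Matrix.trace_mul_vecMulVec_star {ι R : Type*} [Fintype ι] [CommSemiring R] [StarRing R]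
    (W : Matrix ι ι R) (v : ι → R) :
    (W * vecMulVec v (star v)).trace = star v ⬝ᵥ W *ᵥ v := by
  rw [mul_vecMulVec, trace_vecMulVec, dotProduct_comm]

theorem one_kronecker_mulVec_phiPlus (B : Matrix (Fin 2) (Fin 2) ℂ) :
    ((1 : Matrix (Fin 2) (Fin 2) ℂ) ⊗ₖ B) *ᵥ phiPlus = fun p => B p.2 p.1 / Real.sqrt 2 := by
  ext ⟨i, j⟩
  fin_cases i <;> fin_cases j <;>
    simp [mulVec, dotProduct, Fintype.sum_prod_type, phiPlus, one_apply, div_eq_mul_inv]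

theorem trace_ptrans_vecMulVec_mul_conj_phiPlus (u : Fin 2 × Fin 2 → ℂ) (hu₀₀ : u (0, 0) = 0)
    (hu₁₁ : u (1, 1) = 0) (B : Matrix (Fin 2) (Fin 2) ℂ) :
    (ptrans (vecMulVec u (star u)) *
        (((1 : Matrix (Fin 2) (Fin 2) ℂ) ⊗ₖ B) * vecMulVec phiPlus (star phiPlus) *
          ((1 : Matrix (Fin 2) (Fin 2) ℂ) ⊗ₖ B)ᴴ)).trace =
      (star (B 0 0) * B 1 1 * u (0, 1) * star (u (1, 0))
        + star (B 1 1) * B 0 0 * u (1, 0) * star (u (0, 1))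
        + star (B 1 0) * B 1 0 * u (0, 1) * star (u (0, 1))
        + star (B 0 1) * B 0 1 * u (1, 0) * star (u (1, 0))) / 2 := by
  rw [mul_vecMulVec_star_mul_conjTranspose, trace_mul_vecMulVec_star, one_kronecker_mulVec_phiPlus]
  have hsqrt2 : ((Real.sqrt 2 : ℝ) : ℂ) ^ 2 = 2 := by norm_cast; simp
  simp [dotProduct, mulVec, Fintype.sum_prod_type, ptrans, vecMulVec_apply, hu₀₀, hu₁₁]
  field_simp
  rw [hsqrt2]
  ring

theorem smul_psiPlus_add_smul_psiMinus (x y : ℂ) :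
    x • psiPlus + y • psiMinus = fun p => !![0, x + y; x - y, 0] p.1 p.2 / Real.sqrt 2 := by
  ext ⟨i, j⟩
  fin_cases i <;> fin_cases j <;> simp [psiPlus, psiMinus, div_eq_mul_inv] <;> ring

theorem amplitude_damping_witness_value_general (γ a : ℝ)
    (hγ0 : 0 ≤ γ) (ha0 : 0 ≤ a) (ha1 : a ≤ 1)
    (A0 A1 : Matrix (Fin 2) (Fin 2) ℂ)
    (hA0 : A0 = !![1, 0; 0, (Real.sqrt (1 - γ) : ℂ)])
    (hA1 : A1 = !![0, (Real.sqrt γ : ℂ); 0, 0])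
    (A : Matrix (Fin 2 × Fin 2) (Fin 2 × Fin 2) ℂ)
    (hA : A = ((1 : Matrix (Fin 2) (Fin 2) ℂ) ⊗ₖ A0) * vecMulVec phiPlus (star phiPlus) *
            ((1 : Matrix (Fin 2) (Fin 2) ℂ) ⊗ₖ A0)ᴴ
          + ((1 : Matrix (Fin 2) (Fin 2) ℂ) ⊗ₖ A1) * vecMulVec phiPlus (star phiPlus) *
            ((1 : Matrix (Fin 2) (Fin 2) ℂ) ⊗ₖ A1)ᴴ)
    (φ2 : Fin 2 × Fin 2 → ℂ)
    (hφ2 : φ2 = (a : ℂ) • psiPlus + ((Real.sqrt (1 - a ^ 2) : ℝ) : ℂ) • psiMinus)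
    (W2 : Matrix (Fin 2 × Fin 2) (Fin 2 × Fin 2) ℂ)
    (hW2 : W2 = ptrans (vecMulVec φ2 (star φ2))) :
    (W2 * A).trace =
      (((1/4 : ℝ) * (2 * (2 * a ^ 2 - 1) * Real.sqrt (1 - γ) + γ
        - 2 * a * Real.sqrt (1 - a ^ 2) * γ) : ℝ) : ℂ) := by
  rw [smul_psiPlus_add_smul_psiMinus] at hφ2
  subst hA0 hA1 hA hφ2 hW2
  set b := Real.sqrt (1 - a ^ 2)
  have hb : b ^ 2 = 1 - a ^ 2 := Real.sq_sqrt (by nlinarith)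
  rw [mul_add, trace_add, trace_ptrans_vecMulVec_mul_conj_phiPlus _ (by simp) (by simp),
    trace_ptrans_vecMulVec_mul_conj_phiPlus _ (by simp) (by simp)]
  simp only [of_apply, cons_val', cons_val_zero, cons_val_one, cons_val_fin_one, star_zero,
    zero_mul, mul_zero, add_zero, zero_add, star_one, one_mul, Complex.star_def,
    Complex.conj_ofReal, map_sub, map_add, map_div₀]
  norm_cast
  rw [Real.mul_self_sqrt hγ0]
  field_simp
  rw [Real.sq_sqrt zero_le_two]
  linear_combination (4 * γ - 8 * Real.sqrt (1 - γ)) * hb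

theorem amplitude_damping_witness_value (γ a : ℝ)
    (hγ0 : 0 ≤ γ) (hγ1 : γ ≤ 1) (ha0 : 0 ≤ a) (ha1 : a ≤ 1)
    (A0 A1 : Matrix (Fin 2) (Fin 2) ℂ)
    (hA0 : A0 = !![1, 0; 0, (Real.sqrt (1 - γ) : ℂ)])
    (hA1 : A1 = !![0, (Real.sqrt γ : ℂ); 0, 0])
    (A : Matrix (Fin 2 × Fin 2) (Fin 2 × Fin 2) ℂ)
    (hA : A = ((1 : Matrix (Fin 2) (Fin 2) ℂ) ⊗ₖ A0) * vecMulVec phiPlus (star phiPlus) *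
            ((1 : Matrix (Fin 2) (Fin 2) ℂ) ⊗ₖ A0)ᴴ
          + ((1 : Matrix (Fin 2) (Fin 2) ℂ) ⊗ₖ A1) * vecMulVec phiPlus (star phiPlus) *
            ((1 : Matrix (Fin 2) (Fin 2) ℂ) ⊗ₖ A1)ᴴ)
    (φ2 : Fin 2 × Fin 2 → ℂ)
    (hφ2 : φ2 = (a : ℂ) • psiPlus + ((Real.sqrt (1 - a ^ 2) : ℝ) : ℂ) • psiMinus)
    (W2 : Matrix (Fin 2 × Fin 2) (Fin 2 × Fin 2) ℂ)
    (hW2 : W2 = ptrans (vecMulVec φ2 (star φ2))) :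
    (W2 * A).trace =
      (((1/4 : ℝ) * (2 * (2 * a ^ 2 - 1) * Real.sqrt (1 - γ) + γ
        - 2 * a * Real.sqrt (1 - a ^ 2) * γ) : ℝ) : ℂ) :=
  amplitude_damping_witness_value_general γ a hγ0 ha0 ha1 A0 A1 hA0 hA1 A hA φ2 hφ2 W2 hW2
end

section
/- Let |ψ⟩ = Σ_i x_i |ii⟩ in C^d⊗C^d with x_i > 0 and Σ x_i² = 1, and let x* = max_i x_i. Then W = λ·I⊗I - |ψ⟩⟨ψ| is block-positive if and only if λ ≥ x*², and W has a negative eigenvalue if and only if λ < 1. In particular, W is an entanglement witness iff x*² ≤ λ < 1. -/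
open Matrix ComplexOrder

/-- Tensor product of vectors. -/
def tp {d : ℕ} (u v : Fin d → ℂ) : Fin d × Fin d → ℂ := fun p => u p.1 * v p.2

/-! `W = λ • 1 - ψ ψ*` acts as `λ` on `ψ⊥` and as `λ - 1` on the unit vector `ψ`, so it has a
negative eigenvalue iff `λ < 1`. On a product vector `a ⊗ b` its expectation is
`λ ‖a‖² ‖b‖² - |∑ xᵢ aᵢ bᵢ|²`, and `|∑ xᵢ aᵢ bᵢ| ≤ x* ∑ |aᵢ| |bᵢ| ≤ x* ‖a‖ ‖b‖` by Cauchy–Schwarz,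
with equality at `a = b = e_{i*}`; hence `W` is block-positive iff `x*² ≤ λ`. -/

section RankOnePerturbation

variable {n K : Type*} [Fintype n] [DecidableEq n] [Field K] [StarRing K] (c : K) (ψ : n → K)

theorem smul_one_sub_vecMulVec_mulVec (v : n → K) :
    (c • 1 - vecMulVec ψ (star ψ)) *ᵥ v = c • v - (star ψ ⬝ᵥ v) • ψ := by
  rw [sub_mulVec, smul_mulVec, one_mulVec, vecMulVec_mulVec, op_smul_eq_smul]

theorem smul_one_sub_vecMulVec_mulVec_self (hψ : star ψ ⬝ᵥ ψ = 1) :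
    (c • 1 - vecMulVec ψ (star ψ)) *ᵥ ψ = (c - 1) • ψ := by
  rw [smul_one_sub_vecMulVec_mulVec, hψ, one_smul, sub_smul, one_smul]

theorem eq_or_eq_sub_one_of_mulVec_eq_smul (hψ : star ψ ⬝ᵥ ψ = 1) {μ : K} {v : n → K}
    (hv : v ≠ 0) (h : (c • 1 - vecMulVec ψ (star ψ)) *ᵥ v = μ • v) : μ = c ∨ μ = c - 1 := by
  rw [smul_one_sub_vecMulVec_mulVec] at h
  have hcomp : (c - μ) • v = (star ψ ⬝ᵥ v) • ψ := by
    rw [sub_smul, ← h]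
    abel
  by_cases hs : star ψ ⬝ᵥ v = 0
  · rw [hs, zero_smul, smul_eq_zero, sub_eq_zero] at hcomp
    exact .inl (hcomp.resolve_right hv).symm
  · have hproj := congrArg (star ψ ⬝ᵥ ·) hcomp
    simp only [dotProduct_smul, hψ, smul_eq_mul, mul_one] at hproj
    have : c - μ = 1 := by simpa [hs] using hproj
    exact .inr (by linear_combination -this)

theorem star_dotProduct_smul_one_sub_vecMulVec_mulVec (v : n → K) :
    star v ⬝ᵥ (c • 1 - vecMulVec ψ (star ψ)) *ᵥ v
      = c * (star v ⬝ᵥ v) - (star v ⬝ᵥ ψ) * (star ψ ⬝ᵥ v) := by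
  rw [smul_one_sub_vecMulVec_mulVec, dotProduct_sub, dotProduct_smul, dotProduct_smul,
    smul_eq_mul, smul_eq_mul]
  ring

end RankOnePerturbation

section Complex

variable {n : Type*} [Fintype n]

theorem star_dotProduct_self_eq_sum_norm_sq (v : n → ℂ) :
    star v ⬝ᵥ v = ((∑ i, ‖v i‖ ^ 2 : ℝ) : ℂ) := by
  simp [dotProduct, Complex.conj_mul']

theorem exists_neg_eigenvalue_smul_one_sub_vecMulVec_iff [DecidableEq n] {ψ : n → ℂ}
    (hψ : star ψ ⬝ᵥ ψ = 1) (lam : ℝ) :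
    (∃ μ : ℝ, μ < 0 ∧ ∃ v : n → ℂ, v ≠ 0 ∧
      ((lam : ℂ) • 1 - vecMulVec ψ (star ψ)) *ᵥ v = (μ : ℂ) • v) ↔ lam < 1 := by
  constructor
  · rintro ⟨μ, hμ, v, hv, h⟩
    rcases eq_or_eq_sub_one_of_mulVec_eq_smul _ ψ hψ hv h with h | h <;>
      · norm_cast at h
        linarith
  · intro hlam
    have hψ0 : ψ ≠ 0 := by
      rintro rfl
      simp at hψ
    refine ⟨lam - 1, by linarith, ψ, hψ0, ?_⟩
    rw [smul_one_sub_vecMulVec_mulVec_self _ _ hψ]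
    push_cast
    rfl

theorem star_dotProduct_smul_one_sub_vecMulVec_mulVec_eq_ofReal [DecidableEq n] (lam : ℝ)
    (ψ v : n → ℂ) :
    star v ⬝ᵥ ((lam : ℂ) • 1 - vecMulVec ψ (star ψ)) *ᵥ v
      = ((lam * ∑ i, ‖v i‖ ^ 2 - ‖star ψ ⬝ᵥ v‖ ^ 2 : ℝ) : ℂ) := by
  rw [star_dotProduct_smul_one_sub_vecMulVec_mulVec, star_dotProduct_self_eq_sum_norm_sq,
    star_dotProduct, Complex.star_def, Complex.conj_mul']
  push_cast
  rfl

end Complex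

theorem norm_sum_mul_mul_sq_le {ι : Type*} [Fintype ι] {x : ι → ℝ} {M : ℝ}
    (hx0 : ∀ i, 0 ≤ x i) (hxM : ∀ i, x i ≤ M) (a b : ι → ℂ) :
    ‖∑ i, (x i : ℂ) * (a i * b i)‖ ^ 2 ≤ M ^ 2 * ((∑ i, ‖a i‖ ^ 2) * ∑ i, ‖b i‖ ^ 2) := by
  have htriangle : ‖∑ i, (x i : ℂ) * (a i * b i)‖ ≤ ∑ i, x i * ‖a i‖ * ‖b i‖ := by
    refine (norm_sum_le _ _).trans_eq (Finset.sum_congr rfl fun i _ => ?_)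
    rw [norm_mul, norm_mul, Complex.norm_real, Real.norm_of_nonneg (hx0 i), mul_assoc]
  have hweight : ∑ i, (x i * ‖a i‖) ^ 2 ≤ M ^ 2 * ∑ i, ‖a i‖ ^ 2 := by
    rw [Finset.mul_sum]
    gcongr with i
    rw [mul_pow]
    gcongr
    exacts [hx0 i, hxM i]
  calc ‖∑ i, (x i : ℂ) * (a i * b i)‖ ^ 2 ≤ (∑ i, x i * ‖a i‖ * ‖b i‖) ^ 2 := by gcongr
    _ ≤ (∑ i, (x i * ‖a i‖) ^ 2) * ∑ i, ‖b i‖ ^ 2 := Finset.sum_mul_sq_le_sq_mul_sq _ _ _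
    _ ≤ M ^ 2 * ((∑ i, ‖a i‖ ^ 2) * ∑ i, ‖b i‖ ^ 2) := by
      rw [← mul_assoc]
      gcongr

/-- The vector `∑ i, c i |i i⟩`. -/
def diagVec {n K : Type*} [DecidableEq n] [Zero K] (c : n → K) : n × n → K :=
  fun p => if p.1 = p.2 then c p.1 else 0

theorem star_diagVec_dotProduct_diagVec {n : Type*} [Fintype n] [DecidableEq n] (x : n → ℝ) :
    star (diagVec fun i => (x i : ℂ)) ⬝ᵥ diagVec (fun i => (x i : ℂ))
      = ((∑ i, x i ^ 2 : ℝ) : ℂ) := by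
  simp [dotProduct, diagVec, Fintype.sum_prod_type, sq]

section ProductVectors

variable {d : ℕ}

theorem sum_norm_tp_sq (a b : Fin d → ℂ) :
    ∑ p, ‖tp a b p‖ ^ 2 = (∑ i, ‖a i‖ ^ 2) * ∑ j, ‖b j‖ ^ 2 := by
  simp [tp, Fintype.sum_prod_type, mul_pow, Finset.sum_mul_sum]

theorem star_diagVec_dotProduct_tp (x : Fin d → ℝ) (a b : Fin d → ℂ) :
    star (diagVec fun i => (x i : ℂ)) ⬝ᵥ tp a b = ∑ i, (x i : ℂ) * (a i * b i) := by
  simp [dotProduct, diagVec, tp, Fintype.sum_prod_type, apply_ite (starRingEnd ℂ), ite_mul]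

def IsBlockPositive (W : Matrix (Fin d × Fin d) (Fin d × Fin d) ℂ) : Prop :=
  ∀ a b : Fin d → ℂ, 0 ≤ star (tp a b) ⬝ᵥ W *ᵥ tp a b

theorem isBlockPositive_smul_one_sub_vecMulVec_diagVec_iff {x : Fin d → ℝ}
    (hx0 : ∀ i, 0 ≤ x i) {xstar : ℝ} (hxstar : IsGreatest (Set.range x) xstar) (lam : ℝ) :
    IsBlockPositive ((lam : ℂ) • 1 -
      vecMulVec (diagVec fun i => (x i : ℂ)) (star (diagVec fun i => (x i : ℂ))))
      ↔ xstar ^ 2 ≤ lam := by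
  obtain ⟨⟨i₀, rfl⟩, hmax⟩ := hxstar
  simp only [IsBlockPositive, star_dotProduct_smul_one_sub_vecMulVec_mulVec_eq_ofReal,
    sum_norm_tp_sq, star_diagVec_dotProduct_tp, Complex.zero_le_real, sub_nonneg]
  constructor
  · intro h
    simpa [Pi.single_apply, apply_ite (fun z : ℂ => ‖z‖ ^ 2)] using
      h (Pi.single i₀ 1) (Pi.single i₀ 1)
  · intro hlam a b
    calc _ ≤ x i₀ ^ 2 * _ := norm_sum_mul_mul_sq_le hx0 (fun i => hmax ⟨i, rfl⟩) a b
      _ ≤ lam * _ := by gcongr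

end ProductVectors

theorem witness_lambda_identity_minus_mc {d : ℕ} (x : Fin d → ℝ)
    (hxpos : ∀ i, 0 < x i) (hx : ∑ i, (x i) ^ 2 = 1)
    (xstar : ℝ) (hxstar : IsGreatest (Set.range x) xstar)
    (lam : ℝ)
    (ψ : Fin d × Fin d → ℂ) (hψ : ψ = fun p => if p.1 = p.2 then ((x p.1 : ℝ) : ℂ) else 0)
    (W : Matrix (Fin d × Fin d) (Fin d × Fin d) ℂ)
    (hW : W = (lam : ℂ) • (1 : Matrix (Fin d × Fin d) (Fin d × Fin d) ℂ)
      - vecMulVec ψ (star ψ)) :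
    ((∀ a b : Fin d → ℂ, 0 ≤ star (tp a b) ⬝ᵥ W.mulVec (tp a b)) ↔ xstar ^ 2 ≤ lam) ∧
    ((∃ μ : ℝ, μ < 0 ∧ ∃ v : Fin d × Fin d → ℂ, v ≠ 0 ∧ W.mulVec v = (μ : ℂ) • v) ↔ lam < 1) ∧
    (((∀ a b : Fin d → ℂ, 0 ≤ star (tp a b) ⬝ᵥ W.mulVec (tp a b)) ∧
        (∃ μ : ℝ, μ < 0 ∧ ∃ v : Fin d × Fin d → ℂ, v ≠ 0 ∧ W.mulVec v = (μ : ℂ) • v)) ↔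
      (xstar ^ 2 ≤ lam ∧ lam < 1)) := by
  obtain rfl : ψ = diagVec fun i => (x i : ℂ) := hψ
  subst hW
  have hunit := (star_diagVec_dotProduct_diagVec x).trans (by rw [hx, Complex.ofReal_one])
  have hblock := isBlockPositive_smul_one_sub_vecMulVec_diagVec_iff (fun i => (hxpos i).le)
    hxstar lam
  have hneg := exists_neg_eigenvalue_smul_one_sub_vecMulVec_iff hunit lam
  exact ⟨hblock, hneg, and_congr hblock hneg⟩
end
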